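/- arXiv:1710.03856 — 5 statements merged into one kernel-verified Lean document; each statement's English description precedes it below -/
import Mathlib

section
/- Let L be a graph Laplacian matrix (zero row sums, nonpositive off-diagonal entries, so L is a singular M-matrix whose eigenvalues have nonnegative real part) of a graph containing a spanning tree, and let Δ = diag(δ_1,…,δ_N) be a diagonal matrix with δ_i ≥ 0 and at least one δ_i > 0 such that node i is a root node. Then L + Δ is nonsingular. -/
open Matrix

/-- If `L` is the Laplacian of a strongly connected weighted directed graph and `Δ = diagonal d`
is a nonnegative diagonal matrix with at least one positive entry, then `L + Δ` is nonsingular. -/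
theorem stmt6 {N : ℕ} (e : Fin N → Fin N → ℝ) (he : ∀ i j, 0 ≤ e i j)
    (hconn : ∀ i j : Fin N, Relation.ReflTransGen (fun a b => 0 < e b a) i j)
    (L : Matrix (Fin N) (Fin N) ℝ)
    (hL : L = Matrix.diagonal (fun i => ∑ j, e i j) - Matrix.of e)
    (d : Fin N → ℝ) (hd : ∀ i, 0 ≤ d i) (hdi : ∃ i, 0 < d i) :
    (L + Matrix.diagonal d).det ≠ 0 := by
  intro hdet
  obtain ⟨v, hv0, hvM⟩ := Matrix.exists_mulVec_eq_zero_iff.mpr hdet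
  obtain ⟨i1, hi1⟩ := hdi
  haveI : Nonempty (Fin N) := ⟨i1⟩
  obtain ⟨i₀, hi₀⟩ := Finite.exists_max (fun j => |v j|)
  set w : Fin N → ℝ := if 0 ≤ v i₀ then v else -v with hw
  have hwM : (L + Matrix.diagonal d).mulVec w = 0 := by
    by_cases h : 0 ≤ v i₀ <;> simp [hw, h, Matrix.mulVec_neg, hvM]
  set m := |v i₀| with hm
  have hwi₀ : w i₀ = m := by
    by_cases h : 0 ≤ v i₀
    · simp [hw, h, hm, abs_of_nonneg h]
    · simp [hw, h, hm, abs_of_neg (lt_of_not_ge h)]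
  have habs : ∀ j, |w j| = |v j| := by
    intro j
    by_cases h : 0 ≤ v i₀ <;> simp [hw, h]
  have hwle : ∀ j, w j ≤ m := fun j =>
    le_trans (le_abs_self _) (by rw [habs j]; exact hi₀ j)
  have hmpos : 0 < m := by
    obtain ⟨j, hj⟩ := Function.ne_iff.mp hv0
    exact lt_of_lt_of_le (abs_pos.mpr hj) (hi₀ j)
  have hrow : ∀ c, (∑ j, e c j + d c) * w c = ∑ j, e c j * w j := by
    intro c
    have h := congrFun hwM c
    simp [hL, Matrix.mulVec, dotProduct, Matrix.add_apply, Matrix.sub_apply,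
      Matrix.diagonal_apply, sub_mul, add_mul, ite_mul, Finset.sum_add_distrib,
      Finset.sum_sub_distrib, Finset.sum_ite_eq] at h
    linarith [h]
  have hS : ∀ c, w c = m → ∀ a, 0 < e c a → w a = m := by
    intro c hc a ha
    have hle : ∀ j ∈ Finset.univ, e c j * w j ≤ e c j * m :=
      fun j _ => mul_le_mul_of_nonneg_left (hwle j) (he c j)
    have hsumle : ∑ j, e c j * w j ≤ ∑ j, e c j * m := Finset.sum_le_sum hle
    have h1 : (∑ j, e c j + d c) * m = ∑ j, e c j * w j := hc ▸ hrow c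
    have h2 : (∑ j, e c j) * m = ∑ j, e c j * m := Finset.sum_mul _ _ _
    have hdc : 0 ≤ d c * m := mul_nonneg (hd c) hmpos.le
    have heq : ∑ j, e c j * w j = ∑ j, e c j * m := by nlinarith [hsumle]
    have := (Finset.sum_eq_sum_iff_of_le hle).mp heq a (Finset.mem_univ a)
    exact mul_left_cancel₀ (ne_of_gt ha) this
  have hall : ∀ j, w j = m := by
    intro j
    refine Relation.ReflTransGen.head_induction_on (hconn j i₀) hwi₀ ?_
    intro a c h' _ hc
    exact hS c hc a h'
  have h1 := hrow i1
  rw [hall i1] at h1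
  have h2 : ∑ j, e i1 j * w j = (∑ j, e i1 j) * m := by
    rw [Finset.sum_mul]; exact Finset.sum_congr rfl fun j _ => by rw [hall j]
  rw [h2] at h1
  nlinarith [mul_pos hi1 hmpos]
end

section
/- In a directed graph with a spanning tree having at least two root nodes, the subgraph induced by the set of root nodes is strongly connected. -/
/-- In a directed graph with a spanning tree having at least two root nodes, the subgraph
induced by the root nodes is strongly connected: any two roots are joined by a directed path
passing only through root nodes. -/
theorem stmt8 {N : ℕ} (e : Fin N → Fin N → ℝ) (he : ∀ i j, 0 ≤ e i j)
    (IsRoot : Fin N → Prop)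
    (hroot : ∀ v, IsRoot v ↔ ∀ k, Relation.ReflTransGen (fun a b => 0 < e b a) v k)
    (htwo : ∃ i j, i ≠ j ∧ IsRoot i ∧ IsRoot j)
    (i j : Fin N) (hi : IsRoot i) (hj : IsRoot j) :
    Relation.ReflTransGen (fun a b => IsRoot a ∧ IsRoot b ∧ 0 < e b a) i j := by
  have key : ∀ a, Relation.ReflTransGen (fun a b => 0 < e b a) a j →
      Relation.ReflTransGen (fun a b => IsRoot a ∧ IsRoot b ∧ 0 < e b a) a j := by
    intro a hpath
    induction hpath using Relation.ReflTransGen.head_induction_on with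
    | refl => exact Relation.ReflTransGen.refl
    | @head x y hstep hrest ih =>
      have hxj : Relation.ReflTransGen (fun a b => 0 < e b a) x j :=
        Relation.ReflTransGen.head hstep hrest
      have hyroot : IsRoot y := (hroot y).mpr (fun k => hrest.trans ((hroot j).mp hj k))
      have hxroot : IsRoot x := (hroot x).mpr (fun k => hxj.trans ((hroot j).mp hj k))
      exact Relation.ReflTransGen.head ⟨hxroot, hyroot, hstep⟩ ih
  exact key i ((hroot i).mp hi j)
end

section
/- Partition the Laplacian L of a directed graph with spanning tree as L = [[L_rr, 0],[L_nr,r, L_nn]] according to root nodes and non-root nodes. Then the block L_rr is singular (it is itself a graph Laplacian with zero row sums), and the block L_nn is nonsingular. -/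
/-!
Write `e i j ≥ 0` for the weight of the link `j → i`, so that `L = D - E` with `D` the diagonal
of in-degrees. Roots receive no links from non-roots, so the row sums of `L_rr` are those of `L`,
namely `0`, and `L_rr 1 = 0`. For `L_nn`, extend a kernel vector `x` by zero on the roots to a
vector `y` with `(L y)_v = 0` at every non-root `v`. At a node where `|y|` is maximal, this row
equation writes `y_v` as a weighted average of the `y_u` over the in-neighbours `u`, so all of
them attain the maximum too. Following a path back to a root, where `y = 0`, forces `x = 0`.
-/

open Matrix

variable {ι α β : Type*} [Fintype ι] [Fintype α] [Fintype β]

def laplacian [DecidableEq ι] (e : ι → ι → ℝ) : Matrix ι ι ℝ :=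
  diagonal (fun i => ∑ j, e i j) - of e

theorem laplacian_mulVec_apply [DecidableEq ι] (e : ι → ι → ℝ) (y : ι → ℝ) (i : ι) :
    (laplacian e *ᵥ y) i = (∑ j, e i j) * y i - ∑ j, e i j * y j := by
  rw [laplacian, sub_mulVec, Pi.sub_apply, mulVec_diagonal]
  rfl

theorem Matrix.toBlocks₁₁_mulVec {R : Type*} [Semiring R] (A : Matrix (α ⊕ β) (α ⊕ β) R)
    (x : α → R) :
    A.toBlocks₁₁ *ᵥ x = (A *ᵥ Sum.elim x 0) ∘ Sum.inl := by
  ext a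
  simp [mulVec, dotProduct, Fintype.sum_sum_type, toBlocks₁₁]

theorem Matrix.toBlocks₂₂_mulVec {R : Type*} [Semiring R] (A : Matrix (α ⊕ β) (α ⊕ β) R)
    (x : β → R) :
    A.toBlocks₂₂ *ᵥ x = (A *ᵥ Sum.elim 0 x) ∘ Sum.inr := by
  ext b
  simp [mulVec, dotProduct, Fintype.sum_sum_type, toBlocks₂₂]

theorem det_toBlocks₁₁_laplacian_eq_zero [DecidableEq α] [DecidableEq β] [Nonempty α]
    (e : α ⊕ β → α ⊕ β → ℝ) (h : ∀ a b, e (Sum.inl a) (Sum.inr b) = 0) :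
    (laplacian e).toBlocks₁₁.det = 0 := by
  rw [← exists_mulVec_eq_zero_iff]
  refine ⟨1, one_ne_zero, ?_⟩
  ext a
  simp [toBlocks₁₁_mulVec, laplacian_mulVec_apply, Fintype.sum_sum_type, h]

theorem abs_eq_of_abs_sum_mul_eq (w y : ι → ℝ) (hw : ∀ u, 0 ≤ w u) {M : ℝ}
    (hM : ∀ u, |y u| ≤ M) (h : |∑ u, w u * y u| = (∑ u, w u) * M) {u : ι} (hu : 0 < w u) :
    |y u| = M := by
  have hle : ∑ u, w u * |y u| ≤ (∑ u, w u) * M := by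
    rw [Finset.sum_mul]
    exact Finset.sum_le_sum fun u _ => mul_le_mul_of_nonneg_left (hM u) (hw u)
  have hge : (∑ u, w u) * M ≤ ∑ u, w u * |y u| := by
    calc (∑ u, w u) * M = |∑ u, w u * y u| := h.symm
      _ ≤ ∑ u, |w u * y u| := Finset.abs_sum_le_sum_abs _ _
      _ = ∑ u, w u * |y u| := by simp only [abs_mul, abs_of_nonneg (hw _)]
  have hgap : ∑ u, w u * (M - |y u|) = 0 := by
    simp only [mul_sub, Finset.sum_sub_distrib, ← Finset.sum_mul]
    linarith
  have hgap_u := (Finset.sum_eq_zero_iff_of_nonneg fun u _ =>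
    mul_nonneg (hw u) (sub_nonneg.mpr (hM u))).mp hgap u (Finset.mem_univ u)
  rcases mul_eq_zero.mp hgap_u with h0 | h0
  · exact absurd h0 hu.ne'
  · linarith

theorem abs_eq_of_laplacian_mulVec_eq_zero [DecidableEq ι] {e : ι → ι → ℝ}
    (he : ∀ i j, 0 ≤ e i j) {y : ι → ℝ} {v : ι} (hv : (laplacian e *ᵥ y) v = 0)
    {M : ℝ} (hM : ∀ u, |y u| ≤ M) (hyv : |y v| = M) {u : ι} (hu : 0 < e v u) :
    |y u| = M := by
  refine abs_eq_of_abs_sum_mul_eq (e v) y (he v) hM ?_ hu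
  rw [laplacian_mulVec_apply, sub_eq_zero] at hv
  rw [← hv, abs_mul, hyv, abs_of_nonneg (Finset.sum_nonneg fun j _ => he v j)]

theorem det_toBlocks₂₂_laplacian_ne_zero [DecidableEq α] [DecidableEq β]
    {e : α ⊕ β → α ⊕ β → ℝ} (he : ∀ i j, 0 ≤ e i j)
    (hreach : ∀ b, ∃ a, Relation.ReflTransGen (fun u v => 0 < e v u) (Sum.inl a) (Sum.inr b)) :
    (laplacian e).toBlocks₂₂.det ≠ 0 := by
  intro hdet
  obtain ⟨x, hx0, hx⟩ := exists_mulVec_eq_zero_iff.mpr hdet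
  set y : α ⊕ β → ℝ := Sum.elim 0 x
  have hLy : ∀ b, (laplacian e *ᵥ y) (Sum.inr b) = 0 := fun b => by
    simpa [toBlocks₂₂_mulVec] using congrFun hx b
  obtain ⟨b₀, hb₀⟩ := Function.ne_iff.mp hx0
  have : Nonempty (α ⊕ β) := ⟨.inr b₀⟩
  obtain ⟨v₀, hv₀⟩ := Finite.exists_max fun v => |y v|
  have hMpos : 0 < |y v₀| := (abs_pos.mpr hb₀).trans_le (hv₀ (Sum.inr b₀))
  have hmax : ∀ v, |y v| = |y v₀| → ∃ b, v = Sum.inr b := by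
    rintro (a | b) hv
    · simp [y, ← hv] at hMpos
    · exact ⟨b, rfl⟩
  have hclosed : ∀ u v, 0 < e v u → |y v| = |y v₀| → |y u| = |y v₀| := by
    intro u v huv hv
    obtain ⟨b, rfl⟩ := hmax v hv
    exact abs_eq_of_laplacian_mulVec_eq_zero he (hLy b) hv₀ hv huv
  obtain ⟨i₀, rfl⟩ := hmax v₀ rfl
  obtain ⟨a, hpath⟩ := hreach i₀
  obtain ⟨b, hb⟩ := hmax _ <| Relation.ReflTransGen.head_induction_on (motive := fun u _ =>
    |y u| = |y (Sum.inr i₀)|) hpath rfl fun huv _ hv => hclosed _ _ huv hv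
  exact Sum.inl_ne_inr hb

theorem stmt10_general {r s : ℕ} (hr : 0 < r)
    (e : (Fin r ⊕ Fin s) → (Fin r ⊕ Fin s) → ℝ) (he : ∀ i j, 0 ≤ e i j)
    (IsRoot : (Fin r ⊕ Fin s) → Prop)
    (hroot : ∀ v, IsRoot v ↔ ∀ k, Relation.ReflTransGen (fun a b => 0 < e b a) v k)
    (hR : ∀ a : Fin r, IsRoot (Sum.inl a))
    (hNR : ∀ b : Fin s, ¬ IsRoot (Sum.inr b))
    (L : Matrix (Fin r ⊕ Fin s) (Fin r ⊕ Fin s) ℝ)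
    (hL : L = Matrix.diagonal (fun i => ∑ j, e i j) - Matrix.of e) :
    (L.toBlocks₁₁).det = 0 ∧ (L.toBlocks₂₂).det ≠ 0 := by
  obtain rfl : L = laplacian e := hL
  have : Nonempty (Fin r) := ⟨⟨0, hr⟩⟩
  have hno_edge : ∀ a b, e (Sum.inl a) (Sum.inr b) = 0 := by
    intro a b
    by_contra hab
    refine hNR b ((hroot _).mpr fun k => ?_)
    exact .head ((he _ _).lt_of_ne' hab) ((hroot _).mp (hR a) k)
  exact ⟨det_toBlocks₁₁_laplacian_eq_zero e hno_edge,
    det_toBlocks₂₂_laplacian_ne_zero he fun b => ⟨⟨0, hr⟩, (hroot _).mp (hR _) _⟩⟩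

/-- Partitioning the Laplacian of a graph with a spanning tree according to root nodes (`inl`)
and non-root nodes (`inr`), the root block `L_rr` is singular and the non-root block `L_nn`
is nonsingular. -/
theorem stmt10 {r s : ℕ} (hr : 0 < r) (hs : 0 < s)
    (e : (Fin r ⊕ Fin s) → (Fin r ⊕ Fin s) → ℝ) (he : ∀ i j, 0 ≤ e i j)
    (IsRoot : (Fin r ⊕ Fin s) → Prop)
    (hroot : ∀ v, IsRoot v ↔ ∀ k, Relation.ReflTransGen (fun a b => 0 < e b a) v k)
    (hR : ∀ a : Fin r, IsRoot (Sum.inl a))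
    (hNR : ∀ b : Fin s, ¬ IsRoot (Sum.inr b))
    (L : Matrix (Fin r ⊕ Fin s) (Fin r ⊕ Fin s) ℝ)
    (hL : L = Matrix.diagonal (fun i => ∑ j, e i j) - Matrix.of e) :
    (L.toBlocks₁₁).det = 0 ∧ (L.toBlocks₂₂).det ≠ 0 :=
  stmt10_general hr e he IsRoot hroot hR hNR L hL
end

section
/- Let w = (p_1,…,p_N)ᵀ be a left eigenvector of the Laplacian L of a directed graph with a spanning tree, associated with eigenvalue 0 and normalized so wᵀ1_N = 1. Then p_i > 0 if node i is a root node and p_i = 0 if node i is not a root node. -/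
open Matrix Finset

private lemma crossing {α : Type*} (step : α → α → Prop) (P : α → Prop)
    {a b : α} (hab : Relation.ReflTransGen step a b) :
    ¬ P a → P b → ∃ x y, ¬ P x ∧ P y ∧ step x y := by
  induction hab with
  | refl => intro h1 h2; exact absurd h2 h1
  | @tail b c hab hbc ih =>
    intro ha hc
    by_cases hb : P b
    · exact ih ha hb
    · exact ⟨b, c, hb, hc, hbc⟩

private lemma key {N : ℕ} (e : Fin N → Fin N → ℝ) (he : ∀ i j, 0 ≤ e i j)
    (L : Matrix (Fin N) (Fin N) ℝ)
    (hL : L = Matrix.diagonal (fun i => ∑ j, e i j) - Matrix.of e)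
    (u : Fin N → ℝ) (hu : u ᵥ* L = 0)
    (P : Fin N → Prop) [DecidablePred P]
    (h1 : ∀ j, P j → 0 < u j)
    (h2 : ∀ j, ¬ P j → u j ≤ 0 ∨ ∀ i, P i → e j i = 0) :
    ∀ j, P j → ∀ i, ¬ P i → e j i = 0 := by
  set F := Finset.univ.filter P with hF
  have hcF : ∀ j, (∑ i ∈ F, L j i) =
      (if P j then ∑ i ∈ univ.filter (fun i => ¬ P i), e j i else - ∑ i ∈ F, e j i) := by
    intro j
    subst hL
    simp only [Matrix.sub_apply, Matrix.diagonal_apply, Matrix.of_apply,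
      Finset.sum_sub_distrib, Finset.sum_ite_eq]
    by_cases hj : P j
    · have hmem : j ∈ F := by simp [hF, hj]
      rw [if_pos hmem, if_pos hj]
      have := Finset.sum_filter_add_sum_filter_not Finset.univ P (fun i => e j i)
      linarith [this]
    · have hmem : j ∉ F := by simp [hF, hj]
      rw [if_neg hmem, if_neg hj]
      ring
  have hterm0 : ∑ j, u j * (∑ i ∈ F, L j i) = 0 := by
    have h1' : ∀ i, (u ᵥ* L) i = 0 := fun i => congrFun hu i
    calc ∑ j, u j * (∑ i ∈ F, L j i) = ∑ j, ∑ i ∈ F, u j * L j i := by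
          simp [Finset.mul_sum]
      _ = ∑ i ∈ F, ∑ j, u j * L j i := Finset.sum_comm
      _ = ∑ i ∈ F, (u ᵥ* L) i := by
          apply Finset.sum_congr rfl
          intro i _
          simp [Matrix.vecMul, dotProduct]
      _ = 0 := by simp [h1']
  have hnn : ∀ j ∈ Finset.univ, 0 ≤ u j * (∑ i ∈ F, L j i) := by
    intro j _
    rw [hcF j]
    by_cases hj : P j
    · rw [if_pos hj]
      exact mul_nonneg (le_of_lt (h1 j hj)) (Finset.sum_nonneg fun i _ => he j i)
    · rw [if_neg hj]
      rcases h2 j hj with hu0 | hz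
      · have : 0 ≤ ∑ i ∈ F, e j i := Finset.sum_nonneg fun i _ => he j i
        nlinarith
      · have : ∑ i ∈ F, e j i = 0 := by
          apply Finset.sum_eq_zero
          intro i hi
          exact hz i (by simpa [hF] using hi)
        rw [this]; simp
  have heach := (Finset.sum_eq_zero_iff_of_nonneg hnn).mp hterm0
  intro j hj i hi
  have hj0 := heach j (Finset.mem_univ j)
  rw [hcF j, if_pos hj] at hj0
  have hcj : ∑ i ∈ univ.filter (fun i => ¬ P i), e j i = 0 := by
    rcases mul_eq_zero.mp hj0 with h | h
    · exact absurd h (ne_of_gt (h1 j hj))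
    · exact h
  have := (Finset.sum_eq_zero_iff_of_nonneg (fun i _ => he j i)).mp hcj i (by simp [hi])
  exact this

/-- The normalized left eigenvector `w` of the Laplacian of a graph with a spanning tree,
associated with the zero eigenvalue, has strictly positive entries at root nodes and zero
entries at non-root nodes. -/
theorem stmt11 {N : ℕ} (e : Fin N → Fin N → ℝ) (he : ∀ i j, 0 ≤ e i j)
    (IsRoot : Fin N → Prop)
    (hroot : ∀ v, IsRoot v ↔ ∀ k, Relation.ReflTransGen (fun a b => 0 < e b a) v k)
    (hspan : ∃ v, IsRoot v)
    (L : Matrix (Fin N) (Fin N) ℝ)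
    (hL : L = Matrix.diagonal (fun i => ∑ j, e i j) - Matrix.of e)
    (w : Fin N → ℝ) (hw : w ᵥ* L = 0) (hnorm : ∑ i, w i = 1) :
    ∀ i, (IsRoot i → 0 < w i) ∧ (¬ IsRoot i → w i = 0) := by
  classical
  obtain ⟨v, hv⟩ := hspan
  -- if there's an edge i → j (0 < e j i) and j is a root, then i is a root
  have hedge_root : ∀ i j, 0 < e j i → IsRoot j → IsRoot i := by
    intro i j hij hjr
    rw [hroot]
    intro k
    exact Relation.ReflTransGen.trans (Relation.ReflTransGen.single hij) ((hroot j).mp hjr k)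
  -- Step 1: w vanishes on non-roots. First: w ≤ 0 on non-roots (for arbitrary u in left kernel)
  have step1 : ∀ (u : Fin N → ℝ), u ᵥ* L = 0 → ∀ i, ¬ IsRoot i → u i ≤ 0 := by
    intro u hu i hi
    by_contra hpos
    push_neg at hpos
    set P : Fin N → Prop := fun j => ¬ IsRoot j ∧ 0 < u j with hP
    have hk := key e he L hL u hu P (fun j hj => hj.2) ?_
    · -- contradiction via crossing from root v to i
      have hPi : P i := ⟨hi, hpos⟩
      have hPv : ¬ P v := fun h => h.1 hv
      obtain ⟨x, y, hx, hy, hstep⟩ := crossing (fun a b => 0 < e b a) P ((hroot v).mp hv i) hPv hPi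
      exact absurd (hk y hy x hx) (ne_of_gt hstep)
    · intro j hj
      by_cases hjr : IsRoot j
      · right
        intro k hk'
        by_contra hne
        have : 0 < e j k := lt_of_le_of_ne (he j k) (Ne.symm hne)
        exact hk'.1 (hedge_root k j this hjr)
      · left
        by_contra hle
        push_neg at hle
        exact hj ⟨hjr, hle⟩
  have hzero : ∀ i, ¬ IsRoot i → w i = 0 := by
    intro i hi
    have h1 := step1 w hw i hi
    have h2 := step1 (-w) (by rw [Matrix.neg_vecMul, hw, neg_zero]) i hi
    simp only [Pi.neg_apply, neg_nonpos] at h2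
    linarith
  -- Step 2: w > 0 on roots
  have hposset : ∀ j, (0 < w j) → ∀ i, ¬ (0 < w i) → e j i = 0 := by
    apply key e he L hL w hw (fun j => 0 < w j) (fun j hj => hj)
    intro j hj
    left; linarith [not_lt.mp hj]
  have hex : ∃ j, 0 < w j := by
    by_contra hno
    push_neg at hno
    have : ∑ i, w i ≤ 0 := Finset.sum_nonpos fun i _ => hno i
    linarith
  obtain ⟨j0, hj0⟩ := hex
  intro i
  refine ⟨?_, hzero i⟩
  intro hir
  by_contra hni
  obtain ⟨x, y, hx, hy, hstep⟩ := crossing (fun a b => 0 < e b a) (fun j => 0 < w j)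
    ((hroot i).mp hir j0) hni hj0
  exact absurd (hposset y hy x hx) (ne_of_gt hstep)
end

section
/- Suppose A − cλ_i BK is Hurwitz for all nonzero eigenvalues λ_i (i = 2,…,N) of the Laplacian L of a graph with spanning tree (so 0 is a simple eigenvalue of L with right eigenvector 1_N and normalized left eigenvector w). Then for any initial state x(0), the solution of ẋ = (I_N ⊗ A − cL ⊗ BK)x satisfies x(t) − (1_N wᵀ ⊗ e^{At})x(0) → 0 as t → ∞, i.e., agents reach consensus on (wᵀ ⊗ e^{At})x(0). -/
/-!
Write `M = I ⊗ A - c L ⊗ BK` and `P = 1 wᵀ ⊗ I`. Since `L 1 wᵀ = 0` and `wᵀ L = 0`, both `M P` and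
`P M` equal `1 wᵀ ⊗ A`; hence `e^{tM} P = 1 wᵀ ⊗ e^{tA}`, and the difference in question is
`e^{tM} y` with `y = (I - P) x(0) ∈ ker P`. The subspace `ker P` is `M`-invariant, so `e^{tM} y → 0`
as soon as every eigenvalue `μ` of `M` on `ker P` has negative real part: each component of `y` in a
generalized eigenspace then decays like a polynomial times `e^{t Re μ}`.

For such an eigenvalue, the `μ`-eigenspace of `M` inside `ker P` is invariant under `L ⊗ I`, which
commutes with `M`, so it contains a common eigenvector `u` with `(L ⊗ I) u = λ u`. If `λ = 0`, the
columns of `u` lie in `ker L = span 1`, so `u = P u = 0`. Otherwise `λ` is a nonzero eigenvalue of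
`L`, `M u = (I ⊗ (A - cλ BK)) u`, and any nonzero row of `u` is an eigenvector of `A - cλ BK` for
`μ`, so `Re μ < 0` by hypothesis. The argument runs over `ℂ`, after complexifying the real data.
-/

open Matrix Kronecker Filter Topology

theorem Complex.tendsto_exp_mul_mul_pow_atTop_nhds_zero {μ : ℂ} (hμ : μ.re < 0) (k : ℕ) :
    Tendsto (fun t : ℝ => Complex.exp (t * μ) * (t : ℂ) ^ k) atTop (𝓝 0) := by
  rw [tendsto_zero_iff_norm_tendsto_zero]
  refine (tendsto_rpow_mul_exp_neg_mul_atTop_nhds_zero k (-μ.re) (by linarith)).congr' ?_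
  filter_upwards [eventually_ge_atTop 0] with t ht
  rw [norm_mul, Complex.norm_exp, norm_pow, Complex.norm_real, Real.norm_of_nonneg ht,
    Real.rpow_natCast, mul_comm]
  simp [mul_comm]

theorem Module.End.exists_hasEigenvector_mem {K V : Type*} [Field K] [IsAlgClosed K]
    [AddCommGroup V] [Module K V] [FiniteDimensional K V] {f : End K V} {p : Submodule K V}
    (hp : p ≠ ⊥) (hf : ∀ x ∈ p, f x ∈ p) : ∃ μ, ∃ x ∈ p, f.HasEigenvector μ x := by
  have : Nontrivial p := Submodule.nontrivial_iff_ne_bot.mpr hp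
  obtain ⟨μ, hμ⟩ := Module.End.exists_eigenvalue (f.restrict hf)
  obtain ⟨x, hx, hx0⟩ := hμ.exists_hasEigenvector
  refine ⟨μ, x, x.2, ?_, by simpa using hx0⟩
  simpa [Module.End.mem_eigenspace_iff, Subtype.ext_iff] using hx

namespace Matrix

section Exponential

open scoped Norms.Operator

variable {d : Type*} [Fintype d] [DecidableEq d]

theorem exp_smul_mulVec_eq_sum_of_pow_mulVec_eq_zero {N : Matrix d d ℂ} {v : d → ℂ} {a : ℕ}
    (hv : N ^ a *ᵥ v = 0) (z : ℂ) :
    NormedSpace.exp (z • N) *ᵥ v = ∑ k ∈ Finset.range a, (z ^ k / k.factorial) • (N ^ k *ᵥ v) := by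
  have hsum := (NormedSpace.exp_series_hasSum_exp' (𝕂 := ℂ) (z • N)).map
    (AddMonoidHom.mk' (· *ᵥ v) fun X Y => add_mulVec X Y v)
    (continuous_id.matrix_mulVec continuous_const)
  refine hsum.unique (hasSum_sum_of_ne_finset_zero fun k hk => ?_) |>.trans
    (Finset.sum_congr rfl fun k _ => ?_)
  · obtain ⟨j, rfl⟩ := Nat.exists_eq_add_of_le (not_lt.mp (Finset.mem_range.not.mp hk))
    simp [add_comm a j, smul_pow, pow_add, smul_mulVec, ← mulVec_mulVec, hv]
  · simp [smul_pow, smul_mulVec, smul_smul, div_eq_inv_mul]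

theorem exp_smul_eq_cexp_smul_exp_smul_sub (M : Matrix d d ℂ) (μ z : ℂ) :
    NormedSpace.exp (z • M) = Complex.exp (z * μ) • NormedSpace.exp (z • (M - μ • 1)) := by
  have hsplit : z • M = algebraMap ℂ (Matrix d d ℂ) (z * μ) + z • (M - μ • 1) := by
    rw [Algebra.algebraMap_eq_smul_one, smul_sub, mul_smul, add_sub_cancel]
  rw [hsplit, exp_add_of_commute _ _ (Algebra.commute_algebraMap_left _ _), Complex.exp_eq_exp_ℂ,
    Algebra.smul_def (NormedSpace.exp (z * μ))]
  exact congrArg (· * _) (NormedSpace.algebraMap_exp_comm _).symm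

theorem tendsto_exp_smul_mulVec_of_mem_maxGenEigenspace {M : Matrix d d ℂ} {μ : ℂ}
    (hμ : μ.re < 0) {v : d → ℂ} (hv : v ∈ Module.End.maxGenEigenspace (toLinAlgEquiv' M) μ) :
    Tendsto (fun t : ℝ => NormedSpace.exp (t • M) *ᵥ v) atTop (𝓝 0) := by
  obtain ⟨a, hv⟩ := (Module.End.mem_maxGenEigenspace _ _ _).mp hv
  replace hv : (M - μ • 1) ^ a *ᵥ v = 0 := by
    rwa [← toLinAlgEquiv'_apply, map_pow, map_sub, map_smul, map_one]
  simp_rw [← Complex.coe_smul, M.exp_smul_eq_cexp_smul_exp_smul_sub μ, smul_mulVec,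
    exp_smul_mulVec_eq_sum_of_pow_mulVec_eq_zero hv, Finset.smul_sum, smul_smul]
  rw [← Finset.sum_const_zero (s := Finset.range a)]
  refine tendsto_finsetSum _ fun k _ => ?_
  have h := (Complex.tendsto_exp_mul_mul_pow_atTop_nhds_zero hμ k).mul_const
    ((k.factorial : ℂ))⁻¹
  simpa [mul_div_assoc', div_eq_mul_inv, mul_assoc] using h.smul_const ((M - μ • 1) ^ k *ᵥ v)

theorem tendsto_exp_smul_mulVec_of_mem {M : Matrix d d ℂ} {V : Submodule ℂ (d → ℂ)}
    (hV : ∀ v ∈ V, M *ᵥ v ∈ V)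
    (hstable : ∀ μ : ℂ, ∀ v ∈ V, v ≠ 0 → M *ᵥ v = μ • v → μ.re < 0) {v : d → ℂ} (hv : v ∈ V) :
    Tendsto (fun t : ℝ => NormedSpace.exp (t • M) *ᵥ v) atTop (𝓝 0) := by
  set f := (toLinAlgEquiv' M).restrict hV
  suffices ∀ x ∈ ⨆ μ, Module.End.maxGenEigenspace f μ,
      Tendsto (fun t : ℝ => NormedSpace.exp (t • M) *ᵥ (x : d → ℂ)) atTop (𝓝 0) from
    this ⟨v, hv⟩ (Module.End.iSup_maxGenEigenspace_eq_top f ▸ Submodule.mem_top)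
  intro x hx
  induction hx using Submodule.iSup_induction' with
  | mem μ x hx =>
    rcases eq_or_ne x 0 with rfl | hx0
    · simp
    have hf : Module.End.HasEigenvalue f μ :=
      Module.End.HasUnifEigenvalue.lt zero_lt_one ((Submodule.ne_bot_iff _).mpr ⟨x, hx, hx0⟩)
    obtain ⟨y, hy, hy0⟩ := hf.exists_hasEigenvector
    have hμ : μ.re < 0 := hstable μ y y.2 (by simpa using hy0)
      (congrArg Subtype.val (Module.End.mem_eigenspace_iff.mp hy))
    rw [Module.End.maxGenEigenspace, Module.End.genEigenspace_restrict _ _ _ _ hV] at hx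
    exact tendsto_exp_smul_mulVec_of_mem_maxGenEigenspace hμ hx
  | zero => simp
  | add x y _ _ hx hy => simpa [mulVec_add] using hx.add hy

theorem map_ofReal_exp (X : Matrix d d ℝ) :
    (NormedSpace.exp X).map Complex.ofReal = NormedSpace.exp (X.map Complex.ofReal) :=
  NormedSpace.map_exp Complex.ofRealHom.mapMatrix
    (continuous_id.matrix_map Complex.continuous_ofReal) X

variable {𝕂 : Type*} [RCLike 𝕂]

-- Stated for a bare index type: on `Matrix (ι × n) (ι × n) 𝕂`, instance search does not find the
-- completeness of the operator-norm structure that `SemiconjBy.exp_right` asks for.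
theorem _root_.SemiconjBy.matrix_exp_right {x a b : Matrix d d 𝕂} (h : SemiconjBy x a b) :
    SemiconjBy x (NormedSpace.exp a) (NormedSpace.exp b) :=
  h.exp_right

theorem exp_one_kronecker {ι : Type*} [Fintype ι] [DecidableEq ι] (A : Matrix d d 𝕂) :
    NormedSpace.exp ((1 : Matrix ι ι 𝕂) ⊗ₖ A) = 1 ⊗ₖ NormedSpace.exp A := by
  let φ : Matrix d d 𝕂 →+* Matrix (ι × d) (ι × d) 𝕂 :=
    { toFun := fun X => 1 ⊗ₖ X
      map_one' := one_kronecker_one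
      map_mul' := fun X Y => by rw [← mul_kronecker_mul, one_mul]
      map_zero' := kronecker_zero _
      map_add' := kronecker_add _ }
  have hφ : Continuous φ :=
    continuous_pi fun _ => continuous_pi fun _ =>
      continuous_const.mul (continuous_id.matrix_elem _ _)
  exact (NormedSpace.map_exp φ hφ A).symm

end Exponential

variable {ι n : Type*} [Fintype ι] [Fintype n]

theorem kronecker_one_mulVec_apply [DecidableEq n] {R : Type*} [CommSemiring R]
    (X : Matrix ι ι R) (u : ι × n → R) (i : ι) (j : n) :
    ((X ⊗ₖ (1 : Matrix n n R)) *ᵥ u) (i, j) = (X *ᵥ fun k => u (k, j)) i := by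
  simp [mulVec, dotProduct, Fintype.sum_prod_type, kroneckerMap_apply, one_apply]

theorem one_kronecker_mulVec_apply [DecidableEq ι] {R : Type*} [CommSemiring R]
    (Y : Matrix n n R) (u : ι × n → R) (i : ι) (j : n) :
    (((1 : Matrix ι ι R) ⊗ₖ Y) *ᵥ u) (i, j) = (Y *ᵥ fun l => u (i, l)) j := by
  simp [mulVec, dotProduct, Fintype.sum_prod_type, kroneckerMap_apply, one_apply]

theorem mem_spectrum_of_mulVec_eq_smul [DecidableEq n] {K : Type*} [Field K] {X : Matrix n n K}
    {μ : K} {v : n → K} (hv : v ≠ 0) (h : X *ᵥ v = μ • v) : μ ∈ spectrum K X := by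
  rw [← spectrum_toLin', ← Module.End.hasEigenvalue_iff_mem_spectrum]
  exact Module.End.hasEigenvalue_of_hasEigenvector ⟨Module.End.mem_eigenspace_iff.mpr h, hv⟩

theorem ker_mulVecLin_eq_span_one {K : Type*} [Field K] {L : Matrix ι ι K}
    (hrow : L *ᵥ (fun _ => 1) = 0) (hrank : L.rank = Fintype.card ι - 1) :
    LinearMap.ker L.mulVecLin = K ∙ (fun _ => 1) := by
  rcases isEmpty_or_nonempty ι with hι | ⟨⟨i⟩⟩
  · exact Subsingleton.elim _ _
  have hker : Module.finrank K (LinearMap.ker L.mulVecLin) = 1 := by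
    have := LinearMap.finrank_range_add_finrank_ker L.mulVecLin
    rw [Module.finrank_fintype_fun_eq_card] at this
    have : 0 < Fintype.card ι := Fintype.card_pos_iff.mpr ⟨i⟩
    rw [rank] at hrank
    omega
  refine (Submodule.eq_of_le_of_finrank_le ?_ ?_).symm
  · rw [Submodule.span_singleton_le_iff_mem, LinearMap.mem_ker, mulVecLin_apply, hrow]
  · rw [hker, finrank_span_singleton fun h => one_ne_zero (congr_fun h i)]

theorem mul_replicateRow_eq_zero {R : Type*} [Semiring R] {L : Matrix ι ι R}
    (hrow : L *ᵥ (fun _ => 1) = 0) (w : ι → R) : L * replicateRow ι w = 0 := by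
  ext i j
  simpa [mul_apply, ← Finset.sum_mul, mulVec, dotProduct] using
    congrArg (· * w j) (congr_fun hrow i)

theorem replicateRow_mul_replicateRow {R : Type*} [Semiring R] {w : ι → R}
    (hw : ∑ i, w i = 1) : replicateRow ι w * replicateRow ι w = replicateRow ι w := by
  ext i j
  simp [mul_apply, ← Finset.sum_mul, hw]

theorem replicateRow_mulVec_eq_self_of_mulVec_eq_zero {K : Type*} [Field K] {L : Matrix ι ι K}
    (hrow : L *ᵥ (fun _ => 1) = 0) (hrank : L.rank = Fintype.card ι - 1) {w : ι → K}
    (hw : ∑ i, w i = 1) {v : ι → K} (hv : L *ᵥ v = 0) : replicateRow ι w *ᵥ v = v := by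
  rw [← mulVecLin_apply, ← LinearMap.mem_ker, ker_mulVecLin_eq_span_one hrow hrank] at hv
  obtain ⟨a, rfl⟩ := Submodule.mem_span_singleton.mp hv
  ext
  simp [replicateRow_mulVec_eq_const, dotProduct, ← Finset.sum_mul, hw]

theorem map_ofReal_mulVec {m : Type*} (X : Matrix m ι ℝ) (u : ι → ℝ) :
    X.map Complex.ofReal *ᵥ (fun k => (u k : ℂ)) = fun i => ((X *ᵥ u) i : ℂ) :=
  funext fun i => (RingHom.map_mulVec Complex.ofRealHom X u i).symm

theorem map_ofReal_mulVec_eq_self_of_mulVec_eq_zero {L W : Matrix ι ι ℝ}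
    (hW : ∀ v, L *ᵥ v = 0 → W *ᵥ v = v) {v : ι → ℂ} (hv : L.map Complex.ofReal *ᵥ v = 0) :
    W.map Complex.ofReal *ᵥ v = v := by
  have hsplit : ∀ X : Matrix ι ι ℝ, X.map Complex.ofReal *ᵥ v =
      fun i => ⟨(X *ᵥ fun k => (v k).re) i, (X *ᵥ fun k => (v k).im) i⟩ := fun X => by
    funext i
    apply Complex.ext <;> simp [mulVec, dotProduct, Complex.re_sum, Complex.im_sum]
  rw [hsplit] at hv ⊢
  rw [hW _ (funext fun i => congrArg Complex.re (congrFun hv i)),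
    hW _ (funext fun i => congrArg Complex.im (congrFun hv i))]

end Matrix

def closedLoopMatrix {ι n R : Type*} [DecidableEq ι] [CommRing R] (A BK : Matrix n n R) (c : R)
    (L : Matrix ι ι R) : Matrix (ι × n) (ι × n) R :=
  1 ⊗ₖ A - c • (L ⊗ₖ BK)

section ClosedLoop

variable {ι n R : Type*} [Fintype ι] [Fintype n] [DecidableEq ι] [DecidableEq n] [CommRing R]
  {A BK : Matrix n n R} {c : R} {L W : Matrix ι ι R}

theorem closedLoopMatrix_mul_kronecker_one (hLW : L * W = 0) :
    closedLoopMatrix A BK c L * (W ⊗ₖ 1) = W ⊗ₖ A := by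
  rw [closedLoopMatrix, sub_mul, smul_mul_assoc, ← mul_kronecker_mul, ← mul_kronecker_mul, hLW,
    zero_kronecker, smul_zero, sub_zero, one_mul, mul_one]

theorem kronecker_one_mul_closedLoopMatrix (hWL : W * L = 0) :
    (W ⊗ₖ 1) * closedLoopMatrix A BK c L = W ⊗ₖ A := by
  rw [closedLoopMatrix, mul_sub, mul_smul_comm, ← mul_kronecker_mul, ← mul_kronecker_mul, hWL,
    zero_kronecker, smul_zero, sub_zero, one_mul, mul_one]

theorem commute_kronecker_one_closedLoopMatrix (hLW : L * W = 0) (hWL : W * L = 0) :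
    Commute (W ⊗ₖ 1) (closedLoopMatrix A BK c L) :=
  (kronecker_one_mul_closedLoopMatrix hWL).trans (closedLoopMatrix_mul_kronecker_one hLW).symm

theorem commute_kronecker_one_self_closedLoopMatrix :
    Commute (L ⊗ₖ 1) (closedLoopMatrix A BK c L) := by
  simp only [Commute, SemiconjBy, closedLoopMatrix, mul_sub, sub_mul, mul_smul_comm,
    smul_mul_assoc, ← mul_kronecker_mul, one_mul, mul_one]

theorem closedLoopMatrix_mulVec_of_mulVec_eq_smul {u : ι × n → R} {ν : R}
    (hu : (L ⊗ₖ 1) *ᵥ u = ν • u) :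
    closedLoopMatrix A BK c L *ᵥ u = (1 ⊗ₖ (A - (c * ν) • BK)) *ᵥ u := by
  have hsplit : L ⊗ₖ BK = (1 ⊗ₖ BK) * (L ⊗ₖ 1) := by
    rw [← mul_kronecker_mul, one_mul, mul_one]
  have hlin : (1 : Matrix ι ι R) ⊗ₖ (A - (c * ν) • BK) = 1 ⊗ₖ A - (c * ν) • (1 ⊗ₖ BK) := by
    ext; simp [kroneckerMap_apply, mul_sub, mul_left_comm]
  rw [closedLoopMatrix, hsplit, hlin, sub_mulVec, sub_mulVec, smul_mulVec, smul_mulVec,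
    ← mulVec_mulVec, hu, mulVec_smul, smul_smul]

end ClosedLoop

theorem exp_smul_closedLoopMatrix_mul_kronecker_one {𝕂 ι n : Type*} [RCLike 𝕂] [Fintype ι]
    [Fintype n] [DecidableEq ι] [DecidableEq n] {A BK : Matrix n n 𝕂} {c : 𝕂}
    {L W : Matrix ι ι 𝕂} (hLW : L * W = 0) (t : ℝ) :
    NormedSpace.exp (t • closedLoopMatrix A BK c L) * (W ⊗ₖ 1) =
      W ⊗ₖ NormedSpace.exp (t • A) := by
  have h : SemiconjBy (W ⊗ₖ 1) (t • ((1 : Matrix ι ι 𝕂) ⊗ₖ A))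
      (t • closedLoopMatrix A BK c L) := by
    rw [SemiconjBy, mul_smul_comm, smul_mul_assoc, closedLoopMatrix_mul_kronecker_one hLW,
      ← mul_kronecker_mul, mul_one, one_mul]
  rw [← h.matrix_exp_right.eq, ← kronecker_smul, exp_one_kronecker, ← mul_kronecker_mul, mul_one,
    one_mul]

section Spectral

variable {ι n : Type*} [Fintype ι] [Fintype n] [DecidableEq ι] [DecidableEq n]
  {A BK : Matrix n n ℂ} {c : ℂ} {L W : Matrix ι ι ℂ}

theorem re_lt_zero_of_closedLoopMatrix_mulVec_eq_smul (hWL : W * L = 0)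
    (hW : ∀ v, L *ᵥ v = 0 → W *ᵥ v = v)
    (hH : ∀ ν ∈ spectrum ℂ L, ν ≠ 0 → ∀ z ∈ spectrum ℂ (A - (c * ν) • BK), z.re < 0)
    {μ : ℂ} {u : ι × n → ℂ} (hu : u ≠ 0) (hPu : (W ⊗ₖ (1 : Matrix n n ℂ)) *ᵥ u = 0)
    (hMu : closedLoopMatrix A BK c L *ᵥ u = μ • u) : μ.re < 0 := by
  set p := LinearMap.ker (W ⊗ₖ (1 : Matrix n n ℂ)).mulVecLin ⊓
    Module.End.eigenspace (closedLoopMatrix A BK c L).mulVecLin μ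
  have hp : ∀ x ∈ p, (L ⊗ₖ 1).mulVecLin x ∈ p := by
    simp only [p, Submodule.mem_inf, LinearMap.mem_ker, Module.End.mem_eigenspace_iff,
      mulVecLin_apply]
    rintro x ⟨hPx, hMx⟩
    refine ⟨?_, ?_⟩
    · rw [mulVec_mulVec, ← mul_kronecker_mul, hWL, zero_kronecker, zero_mulVec]
    · rw [mulVec_mulVec, ← commute_kronecker_one_self_closedLoopMatrix.eq, ← mulVec_mulVec, hMx,
        mulVec_smul]
  obtain ⟨ν, v, hvp, hLv, hv0⟩ := Module.End.exists_hasEigenvector_mem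
    ((Submodule.ne_bot_iff p).mpr ⟨u, ⟨hPu, Module.End.mem_eigenspace_iff.mpr hMu⟩, hu⟩) hp
  simp only [p, Submodule.mem_inf, LinearMap.mem_ker, Module.End.mem_eigenspace_iff,
    mulVecLin_apply] at hvp hLv
  obtain ⟨hPv, hMv⟩ := hvp
  have hcol : ∀ j, L *ᵥ (fun k => v (k, j)) = ν • fun k => v (k, j) := fun j => by
    ext i; simpa [kronecker_one_mulVec_apply] using congr_fun hLv (i, j)
  rcases eq_or_ne ν 0 with rfl | hν
  · refine absurd (funext fun (k, j) => ?_) hv0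
    have hfix := hW _ ((hcol j).trans (zero_smul _ _))
    simpa [kronecker_one_mulVec_apply, hfix] using congr_fun hPv (k, j)
  obtain ⟨⟨i, j⟩, hij⟩ := Function.ne_iff.mp hv0
  have hrow : (A - (c * ν) • BK) *ᵥ (fun l => v (i, l)) = μ • fun l => v (i, l) := by
    ext l
    rw [← one_kronecker_mulVec_apply (ι := ι), ← closedLoopMatrix_mulVec_of_mulVec_eq_smul hLv,
      hMv]
    rfl
  exact hH ν (mem_spectrum_of_mulVec_eq_smul (Function.ne_iff.mpr ⟨i, hij⟩) (hcol j)) hν μ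
    (mem_spectrum_of_mulVec_eq_smul (Function.ne_iff.mpr ⟨j, hij⟩) hrow)

theorem tendsto_exp_smul_closedLoopMatrix_mulVec (hLW : L * W = 0) (hWL : W * L = 0)
    (hW : ∀ v, L *ᵥ v = 0 → W *ᵥ v = v)
    (hH : ∀ ν ∈ spectrum ℂ L, ν ≠ 0 → ∀ z ∈ spectrum ℂ (A - (c * ν) • BK), z.re < 0)
    {u : ι × n → ℂ} (hPu : (W ⊗ₖ (1 : Matrix n n ℂ)) *ᵥ u = 0) :
    Tendsto (fun t : ℝ => NormedSpace.exp (t • closedLoopMatrix A BK c L) *ᵥ u) atTop (𝓝 0) := by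
  refine tendsto_exp_smul_mulVec_of_mem (V := LinearMap.ker (W ⊗ₖ (1 : Matrix n n ℂ)).mulVecLin)
    (fun v hv => ?_) (fun μ v hv hv0 hMv => ?_) hPu
  · simp only [LinearMap.mem_ker, mulVecLin_apply] at hv ⊢
    rw [mulVec_mulVec, (commute_kronecker_one_closedLoopMatrix hLW hWL).eq, ← mulVec_mulVec, hv,
      mulVec_zero]
  · exact re_lt_zero_of_closedLoopMatrix_mulVec_eq_smul hWL hW hH hv0 hv hMv

end Spectral

theorem map_ofReal_closedLoopMatrix {ι n : Type*} [DecidableEq ι] (A BK : Matrix n n ℝ) (c : ℝ)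
    (L : Matrix ι ι ℝ) :
    (closedLoopMatrix A BK c L).map Complex.ofReal =
      closedLoopMatrix (A.map Complex.ofReal) (BK.map Complex.ofReal) c (L.map Complex.ofReal) := by
  ext; simp [closedLoopMatrix, kroneckerMap_apply, one_apply, apply_ite Complex.ofReal]

theorem tendsto_exp_smul_closedLoopMatrix_mulVec_of_real {ι n : Type*} [Fintype ι] [Fintype n]
    [DecidableEq ι] [DecidableEq n] {A BK : Matrix n n ℝ} {c : ℝ} {L W : Matrix ι ι ℝ}
    (hLW : L * W = 0) (hWL : W * L = 0) (hW : ∀ v, L *ᵥ v = 0 → W *ᵥ v = v)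
    (hH : ∀ ν ∈ spectrum ℂ (L.map Complex.ofReal), ν ≠ 0 → ∀ z ∈ spectrum ℂ
      (A.map Complex.ofReal - ((c : ℂ) * ν) • BK.map Complex.ofReal), z.re < 0)
    {u : ι × n → ℝ} (hPu : (W ⊗ₖ (1 : Matrix n n ℝ)) *ᵥ u = 0) :
    Tendsto (fun t : ℝ => NormedSpace.exp (t • closedLoopMatrix A BK c L) *ᵥ u) atTop (𝓝 0) := by
  have hmul : ∀ X Y : Matrix ι ι ℝ, X * Y = 0 → X.map Complex.ofReal * Y.map Complex.ofReal = 0 :=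
    fun X Y h => (by simpa using congrArg Complex.ofRealHom.mapMatrix h :
      X.map Complex.ofRealHom * Y.map Complex.ofRealHom = 0)
  have hPu' : (W.map Complex.ofReal ⊗ₖ (1 : Matrix n n ℂ)) *ᵥ (fun k => (u k : ℂ)) = 0 := by
    funext ⟨i, j⟩
    have := congr_fun hPu (i, j)
    rw [kronecker_one_mulVec_apply] at this
    simp [kronecker_one_mulVec_apply, map_ofReal_mulVec, this]
  have hc := tendsto_exp_smul_closedLoopMatrix_mulVec (hmul L W hLW) (hmul W L hWL)
    (fun v hv => map_ofReal_mulVec_eq_self_of_mulVec_eq_zero hW hv) hH hPu'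
  have hre : ∀ t : ℝ, NormedSpace.exp (t • closedLoopMatrix (A.map Complex.ofReal)
      (BK.map Complex.ofReal) c (L.map Complex.ofReal)) *ᵥ (fun k => (u k : ℂ)) =
      fun i => ((NormedSpace.exp (t • closedLoopMatrix A BK c L) *ᵥ u) i : ℂ) := fun t => by
    have hsmul : (t • closedLoopMatrix A BK c L).map Complex.ofReal =
        t • closedLoopMatrix (A.map Complex.ofReal) (BK.map Complex.ofReal) c
          (L.map Complex.ofReal) := by
      ext; simp [← map_ofReal_closedLoopMatrix]
    rw [← hsmul, ← map_ofReal_exp, map_ofReal_mulVec]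
  refine tendsto_pi_nhds.2 fun i => ?_
  simpa [hre, Function.comp_def] using
    (Complex.continuous_re.tendsto 0).comp (tendsto_pi_nhds.1 hc i)

theorem stmt17_general {N n m : ℕ}
    (A : Matrix (Fin n) (Fin n) ℝ) (B : Matrix (Fin n) (Fin m) ℝ) (K : Matrix (Fin m) (Fin n) ℝ)
    (c : ℝ)
    (L : Matrix (Fin N) (Fin N) ℝ)
    (hrow : L *ᵥ (fun _ => (1 : ℝ)) = 0)
    (hrank : L.rank = N - 1)
    (w : Fin N → ℝ) (hw : w ᵥ* L = 0) (hnorm : ∑ i, w i = 1)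
    (hHurwitz : ∀ μ ∈ spectrum ℂ (L.map (Complex.ofReal ·)), μ ≠ 0 →
      ∀ z ∈ spectrum ℂ
          ((A.map (Complex.ofReal ·)) - ((c : ℂ) * μ) • ((B * K).map (Complex.ofReal ·))),
        z.re < 0)
    (x0 : Fin N × Fin n → ℝ) :
    Tendsto
      (fun t : ℝ =>
        (NormedSpace.exp
            (t • ((1 : Matrix (Fin N) (Fin N) ℝ) ⊗ₖ A - c • (L ⊗ₖ (B * K))))) *ᵥ x0
          - ((Matrix.of fun (_ : Fin N) (j : Fin N) => w j) ⊗ₖ NormedSpace.exp (t • A)) *ᵥ x0)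
      atTop (nhds 0) := by
  set W := replicateRow (Fin N) w
  have hLW : L * W = 0 := mul_replicateRow_eq_zero hrow w
  have hWL : W * L = 0 := by rw [← replicateRow_vecMul, hw, replicateRow_zero]
  have hW : ∀ v, L *ᵥ v = 0 → W *ᵥ v = v :=
    fun v => replicateRow_mulVec_eq_self_of_mulVec_eq_zero hrow (by simpa using hrank) hnorm
  have hPy : (W ⊗ₖ (1 : Matrix (Fin n) (Fin n) ℝ)) *ᵥ (x0 - (W ⊗ₖ 1) *ᵥ x0) = 0 := by
    rw [mulVec_sub, mulVec_mulVec, ← mul_kronecker_mul, replicateRow_mul_replicateRow hnorm,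
      one_mul, sub_self]
  refine (tendsto_exp_smul_closedLoopMatrix_mulVec_of_real hLW hWL hW hHurwitz hPy).congr
    fun t => ?_
  rw [mulVec_sub, mulVec_mulVec, exp_smul_closedLoopMatrix_mul_kronecker_one hLW]
  rfl

/-- Consensus: if `A − cλ_i BK` is Hurwitz for every nonzero eigenvalue `λ_i` of the Laplacian
`L` of a graph with a spanning tree (`0` a simple eigenvalue, right eigenvector `1_N`,
normalized left eigenvector `w`), then every solution of `ẋ = (I_N ⊗ A − cL ⊗ BK)x` satisfies
`x(t) − (1_N wᵀ ⊗ e^{At})x(0) → 0` as `t → ∞`. -/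
theorem stmt17 {N n m : ℕ}
    (A : Matrix (Fin n) (Fin n) ℝ) (B : Matrix (Fin n) (Fin m) ℝ) (K : Matrix (Fin m) (Fin n) ℝ)
    (c : ℝ) (hc : 0 < c)
    (L : Matrix (Fin N) (Fin N) ℝ)
    (hrow : L *ᵥ (fun _ => (1 : ℝ)) = 0)
    (hrank : L.rank = N - 1)
    (w : Fin N → ℝ) (hw : w ᵥ* L = 0) (hnorm : ∑ i, w i = 1)
    (hHurwitz : ∀ μ ∈ spectrum ℂ (L.map (Complex.ofReal ·)), μ ≠ 0 →
      ∀ z ∈ spectrum ℂ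
          ((A.map (Complex.ofReal ·)) - ((c : ℂ) * μ) • ((B * K).map (Complex.ofReal ·))),
        z.re < 0)
    (x0 : Fin N × Fin n → ℝ) :
    Tendsto
      (fun t : ℝ =>
        (NormedSpace.exp
            (t • ((1 : Matrix (Fin N) (Fin N) ℝ) ⊗ₖ A - c • (L ⊗ₖ (B * K))))) *ᵥ x0
          - ((Matrix.of fun (_ : Fin N) (j : Fin N) => w j) ⊗ₖ NormedSpace.exp (t • A)) *ᵥ x0)
      atTop (nhds 0) :=
  stmt17_general A B K c L hrow hrank w hw hnorm hHurwitz x0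
end
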